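/- arXiv:2411.00218 — 2 statements merged into one kernel-verified Lean document; each statement's English description precedes it below -/
import Mathlib

section
/- Let M = (π₀, K, g) be a state-space model satisfying Assumption A2, and let {α_t}_{t∈ℕ} be a family of parametric nudging transformations. Then for every finite horizon T ≥ 1 there exists a sequence of positive parameters γ_1, …, γ_T such that the nudged model M^α built with the maps α_t(·, γ_t) satisfies p_T(y_{1:T} | M^α) ≥ p_T(y_{1:T} | M), i.e., the nudged model has Bayesian evidence at least as large as that of the original model. -/
open MeasureTheory ENNReal

namespace Nudging

variable {X : Type*} [MeasurableSpace X]

/-- Total variation norm `‖μ - ν‖_TV = |sup_F (μ-ν)(F) - inf_F (μ-ν)(F)|` of the difference of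
two (finite) measures. -/
noncomputable def tvDist (μ ν : Measure X) : ℝ :=
  ((⨆ (F : Set X) (_ : MeasurableSet F), (μ F - ν F)) +
   (⨆ (F : Set X) (_ : MeasurableSet F), (ν F - μ F))).toReal

/-- Supremum norm of a real-valued function. -/
noncomputable def supNorm {α : Type*} (f : α → ℝ) : ℝ := ⨆ x, |f x|

/-- The (normalised) filter measures `π_t` of a state-space model `(π0, K, g)`:
`π_0 = π0` and `π_t(f) = ξ_t(f g_t)/ξ_t(g_t)` where `ξ_t = K_t π_{t-1}`. -/
noncomputable def filt (π0 : Measure X) (K : ℕ → X → Measure X) (g : ℕ → X → ℝ) :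
    ℕ → Measure X
  | 0 => π0
  | t + 1 =>
      let ξ : Measure X := (filt π0 K g t).bind (K (t + 1))
      let ν : Measure X := ξ.withDensity fun x => ENNReal.ofReal (g (t + 1) x)
      (ν Set.univ)⁻¹ • ν

/-- The one-step-ahead predictive measure `ξ_t = K_t π_{t-1}` (for `t ≥ 1`). -/
noncomputable def pred (π0 : Measure X) (K : ℕ → X → Measure X) (g : ℕ → X → ℝ)
    (t : ℕ) : Measure X :=
  (filt π0 K g (t - 1)).bind (K t)

/-- The Bayesian evidence (marginal likelihood) `p_T(y_{1:T}|M) = ∏_{t=1}^T ξ_t(g_t)`. -/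
noncomputable def evidence (π0 : Measure X) (K : ℕ → X → Measure X) (g : ℕ → X → ℝ)
    (T : ℕ) : ℝ :=
  ∏ t ∈ Finset.Icc 1 T, ∫ x, g t x ∂(pred π0 K g t)

/-- The nudged kernel `K_t^α(x,·)`: the pushforward of `K_t(x,·)` under the map `a t`. -/
noncomputable def nudged (K : ℕ → X → Measure X) (a : ℕ → X → X) : ℕ → X → Measure X :=
  fun t x => (K t x).map (a t)

/-- The alternative nudged kernel `K̄_t^α(x,·) := K_t(α_{t-1}(x), ·)`. -/
noncomputable def altKernel (K : ℕ → X → Measure X) (a : ℕ → X → X) : ℕ → X → Measure X :=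
  fun t x => K t (a (t - 1) x)

/-- The modified likelihoods `g_t^α := g_t ∘ α_t` of the alternative nudged model. -/
def altG (g : ℕ → X → ℝ) (a : ℕ → X → X) : ℕ → X → ℝ := fun t x => g t (a t x)

/-- Dobrushin (induced) norm of a Markov kernel:
`‖K‖ = sup_{x,x'} ‖K(x,·) - K(x',·)‖_TV`. -/
noncomputable def dobNorm (K : X → Measure X) : ℝ :=
  ⨆ p : X × X, tvDist (K p.1) (K p.2)



/-!
Nudge with the parameter `1/(n+1)` at the times `t < T` and with `Γ_T` at the final time `T`.
The nudged filter is the pushforward under `α_t` of the filter of the model with kernels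
`K_t(α_{t-1}(x), ·)` and likelihoods `g_t ∘ α_t`; as `n → ∞` these kernels converge in total
variation and these likelihoods pointwise, so the filters up to time `T - 1` converge to the
original ones, and the evidence of the nudged model tends to `p_{T-1} · ξ_T(g_T ∘ α_T(·, Γ_T))`.
This exceeds `p_T = p_{T-1} · ξ_T(g_T)` by `p_{T-1} · Δ_{g_T}(Γ_T) > 0` when `p_T > 0` (otherwise
there is nothing to prove), so some finite `n` will do.
-/

open Filter Topology Set
open scoped NNReal

theorem tvDist_comm (μ ν : Measure X) : tvDist μ ν = tvDist ν μ := by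
  rw [tvDist, tvDist, add_comm]

theorem tvDist_nonneg (μ ν : Measure X) : 0 ≤ tvDist μ ν := toReal_nonneg

theorem measure_le_add_tvDist {μ ν : Measure X} [IsFiniteMeasure μ] [IsFiniteMeasure ν]
    {F : Set X} (hF : MeasurableSet F) : μ F ≤ ν F + ENNReal.ofReal (tvDist μ ν) := by
  set A := ⨆ (F : Set X) (_ : MeasurableSet F), (μ F - ν F)
  set B := ⨆ (F : Set X) (_ : MeasurableSet F), (ν F - μ F)
  have hA : A ≠ ∞ := ne_top_of_le_ne_top (measure_ne_top μ univ)
    (iSup₂_le fun F _ => tsub_le_self.trans (measure_mono (subset_univ F)))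
  have hB : B ≠ ∞ := ne_top_of_le_ne_top (measure_ne_top ν univ)
    (iSup₂_le fun F _ => tsub_le_self.trans (measure_mono (subset_univ F)))
  have hdiff : μ F - ν F ≤ A :=
    le_iSup₂ (f := fun (F : Set X) (_ : MeasurableSet F) => μ F - ν F) F hF
  rw [tvDist, ENNReal.ofReal_toReal (ENNReal.add_ne_top.2 ⟨hA, hB⟩)]
  calc μ F ≤ ν F + (μ F - ν F) := le_add_tsub
    _ ≤ ν F + (A + B) := by gcongr; exact hdiff.trans le_self_add

/-- By the layer-cake formula, this reduces to `measure_le_add_tvDist` on the superlevel sets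
`{f > s}`, which are empty for `s > c`. -/
theorem lintegral_le_add_tvDist {μ ν : Measure X} [IsFiniteMeasure μ] [IsFiniteMeasure ν]
    {f : X → ℝ≥0∞} (hf : Measurable f) {c : ℝ≥0} (hfc : ∀ x, f x ≤ c) :
    ∫⁻ x, f x ∂μ ≤ ∫⁻ x, f x ∂ν + c * ENNReal.ofReal (tvDist μ ν) := by
  set d := ENNReal.ofReal (tvDist μ ν)
  have layer : ∀ ρ : Measure X, ∫⁻ x, f x ∂ρ = ∫⁻ s in Ioi 0, ρ {x | s < (f x).toReal} := by
    intro ρ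
    have hf' : ∀ x, f x = ENNReal.ofReal (f x).toReal := fun x =>
      (ENNReal.ofReal_toReal (ne_top_of_le_ne_top coe_ne_top (hfc x))).symm
    rw [lintegral_congr hf']
    exact lintegral_eq_lintegral_meas_lt ρ (ae_of_all _ fun _ => toReal_nonneg)
      hf.ennreal_toReal.aemeasurable
  have hlevel : ∀ s : ℝ,
      μ {x | s < (f x).toReal} ≤
        ν {x | s < (f x).toReal} + (Iic (c : ℝ)).indicator (fun _ => d) s := by
    intro s
    by_cases hs : s ≤ c
    · rw [indicator_of_mem (mem_Iic.2 hs)]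
      exact measure_le_add_tvDist (measurableSet_lt measurable_const hf.ennreal_toReal)
    · have hempty : {x | s < (f x).toReal} = ∅ := by
        refine eq_empty_of_forall_notMem fun x (hx : s < (f x).toReal) => hs ?_
        exact hx.le.trans (ENNReal.toReal_le_of_le_ofReal c.coe_nonneg (by simpa using hfc x))
      simp [hempty]
  calc ∫⁻ x, f x ∂μ = ∫⁻ s in Ioi 0, μ {x | s < (f x).toReal} := layer μ
    _ ≤ ∫⁻ s in Ioi 0, (ν {x | s < (f x).toReal} + (Iic (c : ℝ)).indicator (fun _ => d) s) :=
      lintegral_mono hlevel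
    _ = ∫⁻ x, f x ∂ν + c * d := by
      rw [lintegral_add_right _ (measurable_const.indicator measurableSet_Iic), ← layer ν,
        lintegral_indicator_const measurableSet_Iic, Measure.restrict_apply measurableSet_Iic,
        Iic_inter_Ioi, Real.volume_Ioc, sub_zero, ENNReal.ofReal_coe_nnreal, mul_comm]

theorem tendsto_tvDist_of_tendsto {E Y : Type*} [SeminormedAddCommGroup E] [MeasurableSpace Y]
    {k : E → Measure Y} {x : E}
    (hk : ∀ ε > (0 : ℝ), ∃ δ > (0 : ℝ), ∀ x', ‖x - x'‖ ≤ δ → tvDist (k x) (k x') ≤ ε)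
    {ι : Type*} {l : Filter ι} {u : ι → E} (hu : Tendsto u l (𝓝 x)) :
    Tendsto (fun i => tvDist (k x) (k (u i))) l (𝓝 0) := by
  rw [Metric.tendsto_nhds]
  intro ε hε
  obtain ⟨δ, hδ, hkδ⟩ := hk (ε / 2) (half_pos hε)
  filter_upwards [Metric.tendsto_nhds.1 hu δ hδ] with i hi
  rw [Real.dist_0_eq_abs, abs_of_nonneg (tvDist_nonneg _ _)]
  refine (hkδ (u i) ?_).trans_lt (half_lt_self hε)
  rw [← dist_eq_norm, dist_comm]
  exact hi.le

theorem tendsto_of_le_add_of_le_add {u v e : ℕ → ℝ≥0∞} {L : ℝ≥0∞} (hL : L ≠ ∞)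
    (hv : Tendsto v atTop (𝓝 L)) (he : Tendsto e atTop (𝓝 0))
    (huv : ∀ n, u n ≤ v n + e n) (hvu : ∀ n, v n ≤ u n + e n) :
    Tendsto u atTop (𝓝 L) := by
  have hlow : Tendsto (fun n => v n - e n) atTop (𝓝 L) := by
    simpa using ENNReal.Tendsto.sub hv he (Or.inl hL)
  have hup : Tendsto (fun n => v n + e n) atTop (𝓝 L) := by simpa using hv.add he
  exact tendsto_of_tendsto_of_tendsto_of_le_of_le hlow hup
    (fun n => tsub_le_iff_right.2 (hvu n)) huv

/-- The test function may move with `n`; this is what lets the pointwise convergent likelihoods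
`g_t ∘ a_n t` pass through the filtering recursion. -/
def TendstoAgainstBounded (μs : ℕ → Measure X) (μ : Measure X) : Prop :=
  ∀ (fs : ℕ → X → ℝ≥0∞) (f : X → ℝ≥0∞) (c : ℝ≥0), (∀ n, Measurable (fs n)) →
    (∀ n x, fs n x ≤ c) → (∀ x, Tendsto (fun n => fs n x) atTop (𝓝 (f x))) →
    Tendsto (fun n => ∫⁻ x, fs n x ∂(μs n)) atTop (𝓝 (∫⁻ x, f x ∂μ))

namespace TendstoAgainstBounded

theorem const (μ : Measure X) [IsFiniteMeasure μ] : TendstoAgainstBounded (fun _ => μ) μ := by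
  intro fs f c hfs hfc hlim
  refine tendsto_lintegral_of_dominated_convergence (fun _ => c) hfs
    (fun n => ae_of_all _ (hfc n)) ?_ (ae_of_all _ hlim)
  simpa using ENNReal.mul_ne_top coe_ne_top (measure_ne_top μ univ)

theorem of_tvDist {νs : ℕ → Measure X} {ν : Measure X} [∀ n, IsFiniteMeasure (νs n)]
    [IsFiniteMeasure ν] (h : Tendsto (fun n => tvDist ν (νs n)) atTop (𝓝 0)) :
    TendstoAgainstBounded νs ν := by
  intro fs f c hfs hfc hlim
  have hfin : ∫⁻ x, f x ∂ν ≠ ∞ :=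
    (IsFiniteMeasure.lintegral_lt_top_of_bounded_to_ennreal ν
      ⟨c, fun x => le_of_tendsto' (hlim x) fun n => hfc n x⟩).ne
  have herr : Tendsto (fun n => (c : ℝ≥0∞) * ENNReal.ofReal (tvDist ν (νs n))) atTop (𝓝 0) := by
    simpa using ENNReal.Tendsto.const_mul
      ((ENNReal.continuous_ofReal.tendsto 0).comp h) (Or.inr coe_ne_top)
  refine tendsto_of_le_add_of_le_add hfin (const ν fs f c hfs hfc hlim) herr
    (fun n => ?_) (fun n => ?_)
  · rw [tvDist_comm]
    exact lintegral_le_add_tvDist (hfs n) (hfc n)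
  · exact lintegral_le_add_tvDist (hfs n) (hfc n)


theorem bind {μs : ℕ → Measure X} {μ : Measure X} (h : TendstoAgainstBounded μs μ)
    {Ks : ℕ → X → Measure X} {K : X → Measure X} (hKs : ∀ n, Measurable (Ks n))
    (hK : Measurable K) (hKs1 : ∀ n x, IsProbabilityMeasure (Ks n x))
    (hKx : ∀ x, TendstoAgainstBounded (fun n => Ks n x) (K x)) :
    TendstoAgainstBounded (fun n => (μs n).bind (Ks n)) (μ.bind K) := by
  intro fs f c hfs hfc hlim
  have hf : Measurable f := measurable_of_tendsto_metrizable hfs (tendsto_pi_nhds.2 hlim)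
  simp only [Measure.lintegral_bind (hKs _).aemeasurable (hfs _).aemeasurable,
    Measure.lintegral_bind hK.aemeasurable hf.aemeasurable]
  refine h _ _ c (fun n => (Measure.measurable_lintegral (hfs n)).comp (hKs n)) (fun n x => ?_)
    fun x => hKx x fs f c hfs hfc hlim
  have := hKs1 n x
  exact (lintegral_mono (hfc n)).trans (by simp)

theorem withDensity_normalize {ξs : ℕ → Measure X} {ξ : Measure X}
    (h : TendstoAgainstBounded ξs ξ) [IsFiniteMeasure ξ] {ws : ℕ → X → ℝ≥0∞} {w : X → ℝ≥0∞}
    {cw : ℝ≥0} (hws : ∀ n, Measurable (ws n)) (hwc : ∀ n x, ws n x ≤ cw)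
    (hwlim : ∀ x, Tendsto (fun n => ws n x) atTop (𝓝 (w x))) (hw0 : ∫⁻ x, w x ∂ξ ≠ 0) :
    TendstoAgainstBounded
      (fun n => ((ξs n).withDensity (ws n) univ)⁻¹ • (ξs n).withDensity (ws n))
      ((ξ.withDensity w univ)⁻¹ • ξ.withDensity w) := by
  intro fs f c hfs hfc hlim
  have hw : Measurable w := measurable_of_tendsto_metrizable hws (tendsto_pi_nhds.2 hwlim)
  have hf : Measurable f := measurable_of_tendsto_metrizable hfs (tendsto_pi_nhds.2 hlim)
  simp only [lintegral_smul_measure, withDensity_apply _ MeasurableSet.univ, Measure.restrict_univ,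
    lintegral_withDensity_eq_lintegral_mul _ (hws _) (hfs _),
    lintegral_withDensity_eq_lintegral_mul _ hw hf]
  have hmass := h ws w cw hws hwc hwlim
  have hbound : ∀ n x, (ws n * fs n) x ≤ ((cw * c : ℝ≥0) : ℝ≥0∞) := fun n x => by
    simpa using mul_le_mul' (hwc n x) (hfc n x)
  have hprod : ∀ x, Tendsto (fun n => (ws n * fs n) x) atTop (𝓝 ((w * f) x)) := fun x =>
    ENNReal.Tendsto.mul (hwlim x) (Or.inr (ne_top_of_le_ne_top coe_ne_top
      (le_of_tendsto' (hlim x) fun n => hfc n x))) (hlim x) (Or.inr (ne_top_of_le_ne_top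
      coe_ne_top (le_of_tendsto' (hwlim x) fun n => hwc n x)))
  have hnum := h (fun n => ws n * fs n) (w * f) (cw * c) (fun n => (hws n).mul (hfs n)) hbound hprod
  refine ENNReal.Tendsto.mul (tendsto_inv_iff.2 hmass) (Or.inr ?_) hnum
    (Or.inr (ENNReal.inv_ne_top.2 hw0))
  exact (IsFiniteMeasure.lintegral_lt_top_of_bounded_to_ennreal ξ
    ⟨cw * c, fun x => le_of_tendsto' (hprod x) fun n => hbound n x⟩).ne

theorem tendsto_integral {μs : ℕ → Measure X} {μ : Measure X} (h : TendstoAgainstBounded μs μ)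
    [IsFiniteMeasure μ] {fs : ℕ → X → ℝ} {f : X → ℝ} {c : ℝ} (hfs : ∀ n, Measurable (fs n))
    (hfs0 : ∀ n x, 0 ≤ fs n x) (hfc : ∀ n x, fs n x ≤ c)
    (hlim : ∀ x, Tendsto (fun n => fs n x) atTop (𝓝 (f x))) :
    Tendsto (fun n => ∫ x, fs n x ∂(μs n)) atTop (𝓝 (∫ x, f x ∂μ)) := by
  have hf0 : ∀ x, 0 ≤ f x := fun x => ge_of_tendsto' (hlim x) fun n => hfs0 n x
  have hf : Measurable f := measurable_of_tendsto_metrizable hfs (tendsto_pi_nhds.2 hlim)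
  have henn := h (fun n x => ENNReal.ofReal (fs n x)) (fun x => ENNReal.ofReal (f x))
    c.toNNReal (fun n => (hfs n).ennreal_ofReal) (fun n x => ENNReal.ofReal_le_ofReal (hfc n x))
    fun x => (ENNReal.continuous_ofReal.tendsto _).comp (hlim x)
  have hfin : ∫⁻ x, ENNReal.ofReal (f x) ∂μ ≠ ∞ :=
    (IsFiniteMeasure.lintegral_lt_top_of_bounded_to_ennreal μ ⟨c.toNNReal, fun x =>
      le_of_tendsto' ((ENNReal.continuous_ofReal.tendsto _).comp (hlim x))
        fun n => ENNReal.ofReal_le_ofReal (hfc n x)⟩).ne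
  simp only [integral_eq_lintegral_of_nonneg_ae (ae_of_all _ (hfs0 _)) (hfs _).aestronglyMeasurable,
    integral_eq_lintegral_of_nonneg_ae (ae_of_all _ hf0) hf.aestronglyMeasurable]
  exact (ENNReal.tendsto_toReal hfin).comp henn

end TendstoAgainstBounded

theorem map_bind_eq_bind_comp (μ : Measure X) {b : X → X} (hb : Measurable b)
    {k : X → Measure X} (hk : Measurable k) : (μ.map b).bind k = μ.bind (k ∘ b) := by
  ext s hs
  rw [Measure.bind_apply hs hk.aemeasurable, Measure.bind_apply hs (hk.comp hb).aemeasurable]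
  exact lintegral_map ((Measure.measurable_coe hs).comp hk) hb

theorem bind_map_eq_map_bind (μ : Measure X) {k : X → Measure X} (hk : Measurable k)
    {a : X → X} (ha : Measurable a) : μ.bind (fun x => (k x).map a) = (μ.bind k).map a := by
  have hka : Measurable fun x => (k x).map a := (Measure.measurable_map a ha).comp hk
  ext s hs
  rw [Measure.map_apply ha hs, Measure.bind_apply (ha hs) hk.aemeasurable,
    Measure.bind_apply hs hka.aemeasurable]
  exact lintegral_congr fun x => Measure.map_apply ha hs

theorem withDensity_map_eq_map_withDensity (μ : Measure X) {a : X → X} (ha : Measurable a)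
    {f : X → ℝ≥0∞} (hf : Measurable f) :
    (μ.map a).withDensity f = (μ.withDensity (f ∘ a)).map a := by
  ext s hs
  rw [withDensity_apply _ hs, Measure.map_apply ha hs, withDensity_apply _ (ha hs),
    Measure.restrict_map ha hs, lintegral_map hf ha]
  rfl

section StateSpaceModel

variable (π0 : Measure X) (K : ℕ → X → Measure X) (g : ℕ → X → ℝ)

theorem filt_succ (t : ℕ) :
    filt π0 K g (t + 1) =
      ((((filt π0 K g t).bind (K (t + 1))).withDensity fun x => ENNReal.ofReal (g (t + 1) x))
        univ)⁻¹ • ((filt π0 K g t).bind (K (t + 1))).withDensity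
          fun x => ENNReal.ofReal (g (t + 1) x) := rfl

theorem pred_succ (t : ℕ) : pred π0 K g (t + 1) = (filt π0 K g t).bind (K (t + 1)) := rfl

theorem evidence_succ (T : ℕ) :
    evidence π0 K g (T + 1) = evidence π0 K g T * ∫ x, g (T + 1) x ∂(pred π0 K g (T + 1)) :=
  Finset.prod_Icc_succ_top (Nat.le_add_left 1 T) _

variable {K} in
theorem evidence_congr_kernel {K' : ℕ → X → Measure X} (hKK' : ∀ t, K (t + 1) = K' (t + 1))
    (T : ℕ) : evidence π0 K g T = evidence π0 K' g T := by
  have hfilt : ∀ t, filt π0 K g t = filt π0 K' g t := by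
    intro t
    induction t with
    | zero => rfl
    | succ t ih => rw [filt_succ, filt_succ, ih, hKK']
  refine Finset.prod_congr rfl fun t ht => ?_
  obtain ⟨s, rfl⟩ := Nat.exists_eq_add_of_le' (Finset.mem_Icc.1 ht).1
  rw [pred_succ, pred_succ, hfilt, hKK']

theorem filt_apply_univ_le_one [IsProbabilityMeasure π0] (t : ℕ) : filt π0 K g t univ ≤ 1 := by
  cases t with
  | zero => exact prob_le_one (μ := π0)
  | succ t =>
    rw [filt_succ, Measure.smul_apply, smul_eq_mul]
    exact ENNReal.inv_mul_le_one _

variable {K} in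
theorem isFiniteMeasure_pred [IsProbabilityMeasure π0] (hK : ∀ t, Measurable (K t))
    (hK1 : ∀ t x, IsProbabilityMeasure (K t x)) (t : ℕ) : IsFiniteMeasure (pred π0 K g t) := by
  refine ⟨lt_of_le_of_lt ?_ one_lt_top⟩
  rw [pred, Measure.bind_apply MeasurableSet.univ (hK t).aemeasurable]
  simpa [hK1] using filt_apply_univ_le_one π0 K g (t - 1)

variable {g} in
theorem integral_pos_of_evidence_pos (hg0 : ∀ t x, 0 ≤ g t x) {T : ℕ}
    (hE : 0 < evidence π0 K g T) {t : ℕ} (ht : t ∈ Finset.Icc 1 T) :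
    0 < ∫ x, g t x ∂(pred π0 K g t) :=
  (integral_nonneg (hg0 t)).lt_of_ne' (Finset.prod_ne_zero_iff.1 hE.ne' t ht)

end StateSpaceModel

section NudgedModel

variable (π0 : Measure X) {K : ℕ → X → Measure X} {g : ℕ → X → ℝ} {a : ℕ → X → X}

theorem map_bind_nudged (hK : ∀ t, Measurable (K t)) (ha : ∀ t, Measurable (a t)) (μ : Measure X)
    (t : ℕ) :
    (μ.map (a t)).bind (nudged K a (t + 1)) = (μ.bind (altKernel K a (t + 1))).map (a (t + 1)) := by
  have hnudged : Measurable (nudged K a (t + 1)) := (Measure.measurable_map _ (ha _)).comp (hK _)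
  rw [map_bind_eq_bind_comp μ (ha t) hnudged]
  exact bind_map_eq_map_bind μ ((hK _).comp (ha t)) (ha (t + 1))

theorem filt_nudged (hK : ∀ t, Measurable (K t)) (hg : ∀ t, Measurable (g t))
    (ha : ∀ t, Measurable (a t)) (ha0 : a 0 = id) (t : ℕ) :
    filt π0 (nudged K a) g t = (filt π0 (altKernel K a) (altG g a) t).map (a t) := by
  induction t with
  | zero => rw [ha0, Measure.map_id]; rfl
  | succ t ih =>
    have hbind : (filt π0 (nudged K a) g t).bind (nudged K a (t + 1)) =
        ((filt π0 (altKernel K a) (altG g a) t).bind (altKernel K a (t + 1))).map (a (t + 1)) := by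
      rw [ih, map_bind_nudged hK ha]
    rw [filt_succ, filt_succ, hbind, withDensity_map_eq_map_withDensity _ (ha (t + 1))
      (hg (t + 1)).ennreal_ofReal, Measure.map_apply (ha (t + 1)) MeasurableSet.univ,
      preimage_univ, ← Measure.map_smul]
    rfl

theorem evidence_nudged (hK : ∀ t, Measurable (K t)) (hg : ∀ t, Measurable (g t))
    (ha : ∀ t, Measurable (a t)) (ha0 : a 0 = id) (T : ℕ) :
    evidence π0 (nudged K a) g T =
      ∏ t ∈ Finset.Icc 1 T, ∫ x, altG g a t x ∂(pred π0 (altKernel K a) (altG g a) t) := by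
  refine Finset.prod_congr rfl fun t ht => ?_
  obtain ⟨s, rfl⟩ := Nat.exists_eq_add_of_le' (Finset.mem_Icc.1 ht).1
  have hpred : pred π0 (nudged K a) g (s + 1) =
      (pred π0 (altKernel K a) (altG g a) (s + 1)).map (a (s + 1)) := by
    rw [pred_succ, pred_succ, filt_nudged π0 hK hg ha ha0, map_bind_nudged hK ha]
  rw [hpred, integral_map (ha _).aemeasurable (hg _).aestronglyMeasurable]
  rfl

end NudgedModel

section Convergence

variable {π0 : Measure X} {K : ℕ → X → Measure X} {g : ℕ → X → ℝ}
  {a : ℕ → ℕ → X → X}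

theorem tendstoAgainstBounded_pred_succ (hK : ∀ t, Measurable (K t))
    (hK1 : ∀ t x, IsProbabilityMeasure (K t x)) (ha : ∀ n t, Measurable (a n t)) (t : ℕ)
    (hfilt : TendstoAgainstBounded (fun n => filt π0 (altKernel K (a n)) (altG g (a n)) t)
      (filt π0 K g t))
    (hKa : ∀ x, Tendsto (fun n => tvDist (K (t + 1) x) (K (t + 1) (a n t x))) atTop (𝓝 0)) :
    TendstoAgainstBounded (fun n => pred π0 (altKernel K (a n)) (altG g (a n)) (t + 1))
      (pred π0 K g (t + 1)) := by
  have := hK1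
  refine hfilt.bind (fun n => (hK _).comp (ha n t)) (hK _) (fun n x => hK1 _ _) fun x => ?_
  exact TendstoAgainstBounded.of_tvDist (νs := fun n => K (t + 1) (a n t x)) (hKa x)

theorem tendstoAgainstBounded_filt [IsProbabilityMeasure π0] (hK : ∀ t, Measurable (K t))
    (hK1 : ∀ t x, IsProbabilityMeasure (K t x)) (hg : ∀ t, Measurable (g t))
    (hg0 : ∀ t x, 0 ≤ g t x) {C : ℕ → ℝ} (hgC : ∀ t x, g t x ≤ C t)
    (ha : ∀ n t, Measurable (a n t)) (t : ℕ)
    (hKa : ∀ s < t, ∀ x, Tendsto (fun n => tvDist (K (s + 1) x) (K (s + 1) (a n s x))) atTop (𝓝 0))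
    (hga : ∀ s < t, ∀ x, Tendsto (fun n => g (s + 1) (a n (s + 1) x)) atTop (𝓝 (g (s + 1) x)))
    (hpos : ∀ s < t, 0 < ∫ x, g (s + 1) x ∂(pred π0 K g (s + 1))) :
    TendstoAgainstBounded (fun n => filt π0 (altKernel K (a n)) (altG g (a n)) t)
      (filt π0 K g t) := by
  induction t with
  | zero => exact TendstoAgainstBounded.const π0
  | succ t ih =>
    have hpred := tendstoAgainstBounded_pred_succ hK hK1 ha t
      (ih (fun s hs => hKa s (by omega)) (fun s hs => hga s (by omega))
        fun s hs => hpos s (by omega)) (hKa t (by omega))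
    have := isFiniteMeasure_pred π0 g hK hK1 (t + 1)
    have hmass : ∫⁻ x, ENNReal.ofReal (g (t + 1) x) ∂(pred π0 K g (t + 1)) ≠ 0 := by
      intro h0
      have h := hpos t (by omega)
      rw [integral_eq_lintegral_of_nonneg_ae (ae_of_all _ (hg0 _)) (hg _).aestronglyMeasurable,
        h0, toReal_zero] at h
      exact lt_irrefl 0 h
    exact hpred.withDensity_normalize (cw := (C (t + 1)).toNNReal)
      (fun n => ((hg _).comp (ha n _)).ennreal_ofReal)
      (fun n x => ENNReal.ofReal_le_ofReal (hgC _ _))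
      (fun x => (ENNReal.continuous_ofReal.tendsto _).comp (hga t (by omega) x)) hmass

theorem tendsto_evidence_nudged [IsProbabilityMeasure π0] (hK : ∀ t, Measurable (K t))
    (hK1 : ∀ t x, IsProbabilityMeasure (K t x)) (hg : ∀ t, Measurable (g t))
    (hg0 : ∀ t x, 0 ≤ g t x) {C : ℕ → ℝ} (hgC : ∀ t x, g t x ≤ C t)
    (ha : ∀ n t, Measurable (a n t)) (ha0 : ∀ n, a n 0 = id) (S : ℕ)
    (hKa : ∀ t ≤ S, ∀ x, Tendsto (fun n => tvDist (K (t + 1) x) (K (t + 1) (a n t x))) atTop (𝓝 0))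
    (hga : ∀ t < S, ∀ x, Tendsto (fun n => g (t + 1) (a n (t + 1) x)) atTop (𝓝 (g (t + 1) x)))
    (hpos : ∀ t < S, 0 < ∫ x, g (t + 1) x ∂(pred π0 K g (t + 1)))
    {h : X → ℝ} (hh : ∀ x, Tendsto (fun n => g (S + 1) (a n (S + 1) x)) atTop (𝓝 (h x))) :
    Tendsto (fun n => evidence π0 (nudged K (a n)) g (S + 1)) atTop
      (𝓝 (evidence π0 K g S * ∫ x, h x ∂(pred π0 K g (S + 1)))) := by
  have hfactor : ∀ t ≤ S, ∀ {f : X → ℝ},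
      (∀ x, Tendsto (fun n => g (t + 1) (a n (t + 1) x)) atTop (𝓝 (f x))) →
      Tendsto (fun n =>
          ∫ x, altG g (a n) (t + 1) x ∂(pred π0 (altKernel K (a n)) (altG g (a n)) (t + 1)))
        atTop (𝓝 (∫ x, f x ∂(pred π0 K g (t + 1)))) := by
    intro t ht f hf
    have := isFiniteMeasure_pred π0 g hK hK1 (t + 1)
    have hfilt := tendstoAgainstBounded_filt hK hK1 hg hg0 hgC ha t (fun s hs => hKa s (by omega))
      (fun s hs => hga s (by omega)) fun s hs => hpos s (by omega)
    exact (tendstoAgainstBounded_pred_succ hK hK1 ha t hfilt (hKa t ht)).tendsto_integral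
      (fun n => (hg _).comp (ha n _)) (fun n x => hg0 _ _) (fun n x => hgC _ _) hf
  simp only [evidence_nudged π0 hK hg (ha _) (ha0 _),
    Finset.prod_Icc_succ_top (Nat.le_add_left 1 S)]
  refine (tendsto_finsetProd _ fun t ht => ?_).mul (hfactor S le_rfl hh)
  obtain ⟨s, rfl⟩ := Nat.exists_eq_add_of_le' (Finset.mem_Icc.1 ht).1
  exact hfactor s (by grind) (hga s (by grind))

theorem evidence_succ_lt [IsProbabilityMeasure π0] (hK : ∀ t, Measurable (K t))
    (hK1 : ∀ t x, IsProbabilityMeasure (K t x)) {T : ℕ} (hg : Measurable (g (T + 1)))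
    (hg0 : ∀ x, 0 ≤ g (T + 1) x) {C : ℝ} (hgC : ∀ x, g (T + 1) x ≤ C) {f : X → X}
    (hf : Measurable f) (hE : 0 < evidence π0 K g (T + 1))
    (hΔ : 0 < ∫ x, (g (T + 1) (f x) - g (T + 1) x) ∂(pred π0 K g (T + 1))) :
    evidence π0 K g (T + 1) < evidence π0 K g T * ∫ x, g (T + 1) (f x) ∂(pred π0 K g (T + 1)) := by
  have := isFiniteMeasure_pred π0 g hK hK1 (T + 1)
  have hint : ∀ {f' : X → X}, Measurable f' →
      Integrable (fun x => g (T + 1) (f' x)) (pred π0 K g (T + 1)) := fun hf' =>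
    .of_bound (hg.comp hf').aestronglyMeasurable C
      (ae_of_all _ fun x => by simpa [abs_of_nonneg (hg0 _)] using hgC _)
  rw [integral_sub (hint hf) (hint (f' := fun x => x) measurable_id), sub_pos] at hΔ
  rw [evidence_succ] at hE ⊢
  exact mul_lt_mul_of_pos_left hΔ (pos_of_mul_pos_left hE (integral_nonneg hg0))

end Convergence

theorem tendsto_one_div_add_one_of_continuousOn {E : Type*} [TopologicalSpace E] {f : ℝ → E}
    (hf : ContinuousOn f (Ici 0)) : Tendsto (fun n : ℕ => f (1 / (n + 1))) atTop (𝓝 (f 0)) :=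
  (hf 0 self_mem_Ici).tendsto.comp <| tendsto_nhdsWithin_iff.2
    ⟨tendsto_one_div_add_atTop_nhds_zero_nat,
      .of_forall fun _ => mem_Ici.2 Nat.one_div_pos_of_nat.le⟩

theorem nudging_increases_evidence_general
    {d : ℕ}
    (π0 : Measure (EuclideanSpace ℝ (Fin d))) (hπ0 : IsProbabilityMeasure π0)
    (K : ℕ → EuclideanSpace ℝ (Fin d) → Measure (EuclideanSpace ℝ (Fin d)))
    (hKmeas : ∀ t, Measurable (K t))
    (hKprob : ∀ t x, IsProbabilityMeasure (K t x))
    (g : ℕ → EuclideanSpace ℝ (Fin d) → ℝ)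
    (hg0 : ∀ t x, 0 ≤ g t x)
    -- Assumption A2 (i): the likelihoods are continuous and bounded
    (hgcont : ∀ t, Continuous (g t))
    (hgbdd : ∀ t, ∃ C : ℝ, ∀ x, g t x ≤ C)
    -- Assumption A2 (ii): the kernels are continuous in total variation
    (hKtv : ∀ t (x : EuclideanSpace ℝ (Fin d)), ∀ ε > (0 : ℝ), ∃ δ > (0 : ℝ),
        ∀ x', ‖x - x'‖ ≤ δ → tvDist (K t x) (K t x') ≤ ε)
    -- `{α_t}` is a family of parametric nudging transformations:
    (α : ℕ → EuclideanSpace ℝ (Fin d) → ℝ → EuclideanSpace ℝ (Fin d))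
    (hαmeas : ∀ t γ, Measurable fun x => α t x γ)
    -- (i) continuity in `γ` and `α_t(x,γ) → x` as `γ → 0`
    (hαcont : ∀ t x, ContinuousOn (fun γ => α t x γ) (Set.Ici 0))
    (hα0 : ∀ t x, α t x 0 = x)
    (Γ : ℕ → ℝ) (hΓ : ∀ t, 0 < Γ t)
    -- (iii) `Δ_{g_t}(γ) > 0` for `γ ∈ (0,Γ_t]`
    (hΔpos : ∀ t, ∀ γ ∈ Set.Ioc (0 : ℝ) (Γ t),
        0 < ∫ x, (g t (α t x γ) - g t x) ∂(pred π0 K g t))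
    (T : ℕ) :
    ∃ γ : ℕ → ℝ, (∀ t, 0 < γ t) ∧
      evidence π0 K g T ≤
        evidence π0 (nudged K fun t x => α t x (γ t)) g T := by
  obtain _ | S := T
  · exact ⟨Γ, hΓ, by simp [evidence]⟩
  by_cases hE : evidence π0 K g (S + 1) ≤ 0
  · exact ⟨Γ, hΓ, hE.trans (Finset.prod_nonneg fun t _ => integral_nonneg (hg0 t))⟩
  rw [not_le] at hE
  choose C hC using hgbdd
  have hg : ∀ t, Measurable (g t) := fun t => (hgcont t).measurable
  let γs : ℕ → ℕ → ℝ := fun n t => if t = S + 1 then Γ (S + 1) else 1 / (n + 1)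
  -- the map at time 0 never enters the nudged model; taking it to be `id` lets `filt_nudged` apply
  let a : ℕ → ℕ → EuclideanSpace ℝ (Fin d) → EuclideanSpace ℝ (Fin d) :=
    fun n t => if t = 0 then id else fun x => α t x (γs n t)
  have ha : ∀ n t, Measurable (a n t) := fun n t => by
    by_cases ht : t = 0 <;> simp [a, ht, hαmeas, measurable_id]
  have ha_lim : ∀ t ≤ S, ∀ x, Tendsto (fun n => a n t x) atTop (𝓝 x) := by
    intro t ht x
    rcases eq_or_ne t 0 with rfl | ht0
    · exact tendsto_const_nhds
    simp only [a, γs, if_neg ht0, if_neg (show t ≠ S + 1 by omega)]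
    simpa only [hα0] using tendsto_one_div_add_one_of_continuousOn (hαcont t x)
  have hlim := tendsto_evidence_nudged hKmeas hKprob hg hg0 hC ha (fun n => if_pos rfl) S
    (fun t ht x => tendsto_tvDist_of_tendsto (hKtv (t + 1) x) (ha_lim t ht x))
    (fun t ht x => ((hgcont _).tendsto x).comp (ha_lim (t + 1) ht x))
    (fun t ht => integral_pos_of_evidence_pos π0 K hg0 hE (Finset.mem_Icc.2 ⟨by omega, by omega⟩))
    (h := fun x => g (S + 1) (α (S + 1) x (Γ (S + 1)))) fun x => by simp [a, γs]
  have hgain := evidence_succ_lt hKmeas hKprob (hg _) (hg0 _) (hC _) (hαmeas _ _) hE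
    (hΔpos (S + 1) (Γ (S + 1)) ⟨hΓ _, le_rfl⟩)
  obtain ⟨n, hn⟩ := (hlim.eventually (eventually_gt_nhds hgain)).exists
  refine ⟨γs n, fun t => ?_, ?_⟩
  · simp only [γs]
    split_ifs
    exacts [hΓ _, Nat.one_div_pos_of_nat]
  · rw [evidence_congr_kernel π0 g (K := nudged K fun t x => α t x (γs n t)) (K' := nudged K (a n))
      fun t => by unfold nudged; simp only [a, Nat.add_one_ne_zero, if_false]]
    exact hn.le

/-- **Theorem 1 (evidence increase by nudging).**
Let `M = (π0, K, g)` be a state-space model satisfying Assumption A2 and let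
`{α_t}` be a family of parametric nudging transformations.  Then for every finite
horizon `T ≥ 1` there is a sequence of positive parameters `γ_1, …, γ_T` such that the
nudged model `M^α` (built from the maps `α_t(·, γ_t)`) has Bayesian evidence at least
as large as that of `M`: `p_T(y_{1:T} | M^α) ≥ p_T(y_{1:T} | M)`. -/
theorem nudging_increases_evidence
    {d : ℕ}
    (π0 : Measure (EuclideanSpace ℝ (Fin d))) (hπ0 : IsProbabilityMeasure π0)
    (K : ℕ → EuclideanSpace ℝ (Fin d) → Measure (EuclideanSpace ℝ (Fin d)))
    (hKmeas : ∀ t, Measurable (K t))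
    (hKprob : ∀ t x, IsProbabilityMeasure (K t x))
    (g : ℕ → EuclideanSpace ℝ (Fin d) → ℝ)
    (hg0 : ∀ t x, 0 ≤ g t x)
    -- Assumption A2 (i): the likelihoods are continuous and bounded
    (hgcont : ∀ t, Continuous (g t))
    (hgbdd : ∀ t, ∃ C : ℝ, ∀ x, g t x ≤ C)
    -- Assumption A2 (ii): the kernels are continuous in total variation
    (hKtv : ∀ t (x : EuclideanSpace ℝ (Fin d)), ∀ ε > (0 : ℝ), ∃ δ > (0 : ℝ),
        ∀ x', ‖x - x'‖ ≤ δ → tvDist (K t x) (K t x') ≤ ε)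
    -- `{α_t}` is a family of parametric nudging transformations:
    (α : ℕ → EuclideanSpace ℝ (Fin d) → ℝ → EuclideanSpace ℝ (Fin d))
    (hαmeas : ∀ t γ, Measurable fun x => α t x γ)
    -- (i) continuity in `γ` and `α_t(x,γ) → x` as `γ → 0`
    (hαcont : ∀ t x, ContinuousOn (fun γ => α t x γ) (Set.Ici 0))
    (hα0 : ∀ t x, α t x 0 = x)
    -- (ii) `g_t(α_t(x,γ)) ≥ g_t(x)` on `𝒳 × [0,Γ_t]`
    (Γ : ℕ → ℝ) (hΓ : ∀ t, 0 < Γ t)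
    (hinc : ∀ t x, ∀ γ ∈ Set.Icc (0 : ℝ) (Γ t), g t x ≤ g t (α t x γ))
    -- (iii) `Δ_{g_t}(γ) > 0` for `γ ∈ (0,Γ_t]`
    (hΔpos : ∀ t, ∀ γ ∈ Set.Ioc (0 : ℝ) (Γ t),
        0 < ∫ x, (g t (α t x γ) - g t x) ∂(pred π0 K g t))
    (T : ℕ) (hT : 1 ≤ T) :
    ∃ γ : ℕ → ℝ, (∀ t, 0 < γ t) ∧
      evidence π0 K g T ≤
        evidence π0 (nudged K fun t x => α t x (γ t)) g T :=
  nudging_increases_evidence_general π0 hπ0 K hKmeas hKprob g hg0 hgcont hgbdd hKtv α hαmeas hαcont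
    hα0 Γ hΓ hΔpos T

end Nudging
end

section
/- In the setting of the comparison between the predictive measures ξ_t of a state-space model M and the predictive measures ξ̄_t^α of its alternative nudged model M̄^α built from parametric nudging transformations, if the nudging parameter γ is selected such that Δ_{g_t}(γ) ≥ ‖g_t‖_∞ ‖ξ_t − ξ̄_t^α‖_TV, then the normalisation constants satisfy ξ_t(g_t) ≤ ξ̄_t^α(g_t^α). -/
/-!
Take a Hahn decomposition `P` of `ξ_t - ξ̄_t^α`. For a function `f` with values in `[0, C]`,
`ξ_t(f 1_{Pᶜ}) ≤ ξ̄_t^α(f 1_{Pᶜ})`, while on `P` the surplus `ξ_t(f 1_P) - ξ̄_t^α(f 1_P)` is at most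
`C (ξ_t - ξ̄_t^α)(P) ≤ C ‖ξ_t - ξ̄_t^α‖_TV`. With `f = g_t ∘ α_t(·, γ)` and `C = ‖g_t‖_∞`,
`ξ_t(g_t) = ξ_t(g_t^α) - Δ_{g_t}(γ) ≤ ξ_t(g_t^α) - ‖g_t‖_∞ ‖ξ_t - ξ̄_t^α‖_TV ≤ ξ̄_t^α(g_t^α)`.
-/

open MeasureTheory ENNReal

namespace Nudging

variable {X : Type*} [MeasurableSpace X]

/-- The nudging maps obtained from a parametric family `α` and a sequence of nudging
parameters `γseq` (with `α₀` the identity). -/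
noncomputable def aOf {X : Type*} (α : ℕ → X → ℝ → X) (γseq : ℕ → ℝ) : ℕ → X → X :=
  fun t x => if t = 0 then x else α t x (γseq t)

open ProbabilityTheory

section Model

variable (π0 : Measure X) (K : ℕ → X → Measure X) (g : ℕ → X → ℝ)

lemma filt_succ_eq_cond (t : ℕ) :
    filt π0 K g (t + 1) =
      (((filt π0 K g t).bind (K (t + 1))).withDensity
        fun x => ENNReal.ofReal (g (t + 1) x))[|Set.univ] := by
  rw [filt, ProbabilityTheory.cond, Measure.restrict_univ]

instance isZeroOrProbabilityMeasure_filt [IsZeroOrProbabilityMeasure π0] :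
    ∀ n, IsZeroOrProbabilityMeasure (filt π0 K g n)
  | 0 => ‹_›
  | t + 1 => by rw [filt_succ_eq_cond]; infer_instance

lemma isZeroOrProbabilityMeasure_pred [IsZeroOrProbabilityMeasure π0]
    (hK : ∀ t, Measurable (K t)) (hKprob : ∀ t x, IsProbabilityMeasure (K t x)) (t : ℕ) :
    IsZeroOrProbabilityMeasure (pred π0 K g t) :=
  let κ : Kernel X X := ⟨K t, hK t⟩
  have : IsMarkovKernel κ := ⟨hKprob t⟩
  inferInstanceAs (IsZeroOrProbabilityMeasure (κ ∘ₘ filt π0 K g (t - 1)))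

end Model

lemma measurable_aOf {α : ℕ → X → ℝ → X} (hα : ∀ t γ, Measurable fun x => α t x γ)
    (γseq : ℕ → ℝ) (t : ℕ) : Measurable (aOf α γseq t) := by
  unfold aOf
  split_ifs
  · exact measurable_id
  · exact hα t (γseq t)

lemma supNorm_nonneg {α : Type*} (f : α → ℝ) : 0 ≤ supNorm f :=
  Real.iSup_nonneg fun _ => abs_nonneg _

lemma le_supNorm {α : Type*} {f : α → ℝ} {B : ℝ} (hf0 : ∀ x, 0 ≤ f x) (hfB : ∀ x, f x ≤ B)
    (x : α) : f x ≤ supNorm f := by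
  have hbdd : BddAbove (Set.range fun x => |f x|) :=
    ⟨B, by rintro _ ⟨y, rfl⟩; simpa only [abs_of_nonneg (hf0 y)] using hfB y⟩
  exact (le_abs_self _).trans (le_ciSup hbdd x)

section TotalVariation

variable {μ ν : Measure X}

lemma integrable_of_nonneg_of_le [IsFiniteMeasure μ] {f : X → ℝ} (hf : Measurable f)
    (hf0 : ∀ x, 0 ≤ f x) {C : ℝ} (hfC : ∀ x, f x ≤ C) : Integrable f μ :=
  .of_bound hf.aestronglyMeasurable C
    (.of_forall fun x => (Real.norm_of_nonneg (hf0 x)).trans_le (hfC x))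

lemma lintegral_le_lintegral_add_mul_sub_of_le [IsFiniteMeasure ν] (hνμ : ν ≤ μ)
    {f : X → ℝ≥0∞} {c : ℝ≥0∞} (hfc : ∀ x, f x ≤ c) :
    ∫⁻ x, f x ∂μ ≤ ∫⁻ x, f x ∂ν + c * (μ Set.univ - ν Set.univ) :=
  calc ∫⁻ x, f x ∂μ = ∫⁻ x, f x ∂ν + ∫⁻ x, f x ∂(μ - ν) := by
        rw [← lintegral_add_measure, add_comm, Measure.sub_add_cancel_of_le hνμ]
    _ ≤ ∫⁻ x, f x ∂ν + ∫⁻ _, c ∂(μ - ν) := by gcongr; exact hfc _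
    _ = ∫⁻ x, f x ∂ν + c * (μ Set.univ - ν Set.univ) := by
        rw [lintegral_const, Measure.sub_apply MeasurableSet.univ hνμ]

lemma lintegral_le_lintegral_add_mul_iSup_sub [IsFiniteMeasure μ] [IsFiniteMeasure ν]
    {f : X → ℝ≥0∞} {c : ℝ≥0∞} (hfc : ∀ x, f x ≤ c) :
    ∫⁻ x, f x ∂μ ≤
      ∫⁻ x, f x ∂ν + c * ⨆ (F : Set X) (_ : MeasurableSet F), (μ F - ν F) := by
  obtain ⟨P, hP⟩ := exists_isHahnDecomposition ν μ
  have hPmeas := hP.measurableSet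
  have hsurplus := lintegral_le_lintegral_add_mul_sub_of_le hP.le_on hfc
  rw [Measure.restrict_apply_univ, Measure.restrict_apply_univ] at hsurplus
  calc ∫⁻ x, f x ∂μ = ∫⁻ x in P, f x ∂μ + ∫⁻ x in Pᶜ, f x ∂μ :=
        (lintegral_add_compl f hPmeas).symm
    _ ≤ (∫⁻ x in P, f x ∂ν + c * (μ P - ν P)) + ∫⁻ x in Pᶜ, f x ∂ν :=
        add_le_add hsurplus (lintegral_mono' hP.ge_on_compl le_rfl)
    _ = ∫⁻ x, f x ∂ν + c * (μ P - ν P) := by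
        rw [← lintegral_add_compl f hPmeas (μ := ν)]; ring
    _ ≤ ∫⁻ x, f x ∂ν + c * ⨆ (F : Set X) (_ : MeasurableSet F), (μ F - ν F) := by
        gcongr
        exact le_iSup₂_of_le P hPmeas le_rfl

lemma integral_le_integral_add_mul_tvDist [IsFiniteMeasure μ] [IsFiniteMeasure ν]
    {f : X → ℝ} (hf : Measurable f) (hf0 : ∀ x, 0 ≤ f x) {C : ℝ} (hC : 0 ≤ C)
    (hfC : ∀ x, f x ≤ C) :
    ∫ x, f x ∂μ ≤ ∫ x, f x ∂ν + C * tvDist μ ν := by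
  set S₁ : ℝ≥0∞ := ⨆ (F : Set X) (_ : MeasurableSet F), (μ F - ν F)
  set S₂ : ℝ≥0∞ := ⨆ (F : Set X) (_ : MeasurableSet F), (ν F - μ F)
  have hS_le {μ' ν' : Measure X} [IsFiniteMeasure μ'] :
      ⨆ (F : Set X) (_ : MeasurableSet F), (μ' F - ν' F) ≠ ∞ :=
    ne_top_of_le_ne_top (measure_ne_top μ' Set.univ)
      (iSup₂_le fun F _ => tsub_le_self.trans (measure_mono (Set.subset_univ F)))
  have hS : S₁ + S₂ ≠ ∞ := add_ne_top.2 ⟨hS_le, hS_le⟩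
  have hfν : ∫⁻ x, ENNReal.ofReal (f x) ∂ν ≠ ∞ :=
    (integrable_of_nonneg_of_le hf hf0 hfC).lintegral_lt_top.ne
  have hlint : ∫⁻ x, ENNReal.ofReal (f x) ∂μ ≤
      ∫⁻ x, ENNReal.ofReal (f x) ∂ν + ENNReal.ofReal C * (S₁ + S₂) :=
    (lintegral_le_lintegral_add_mul_iSup_sub fun x => ofReal_le_ofReal (hfC x)).trans
      (by gcongr; exact le_self_add)
  rw [integral_eq_lintegral_of_nonneg_ae (.of_forall hf0) hf.aestronglyMeasurable,
    integral_eq_lintegral_of_nonneg_ae (.of_forall hf0) hf.aestronglyMeasurable, tvDist,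
    ← toReal_ofReal hC, ← toReal_mul, ← toReal_add hfν (mul_ne_top ofReal_ne_top hS)]
  exact toReal_mono (add_ne_top.2 ⟨hfν, mul_ne_top ofReal_ne_top hS⟩) hlint

end TotalVariation

theorem normalisation_increase_of_selection_general
    {d : ℕ}
    (π0 : Measure (EuclideanSpace ℝ (Fin d))) (hπ0 : IsProbabilityMeasure π0)
    (K : ℕ → EuclideanSpace ℝ (Fin d) → Measure (EuclideanSpace ℝ (Fin d)))
    (hKmeas : ∀ t, Measurable (K t))
    (hKprob : ∀ t x, IsProbabilityMeasure (K t x))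
    (g : ℕ → EuclideanSpace ℝ (Fin d) → ℝ)
    (hg0 : ∀ t x, 0 ≤ g t x)
    (hgmeas : ∀ t, Measurable (g t))
    (hgbdd : ∀ t, ∃ C : ℝ, ∀ x, g t x ≤ C)
    -- `{α_t}` is a family of parametric nudging transformations
    (α : ℕ → EuclideanSpace ℝ (Fin d) → ℝ → EuclideanSpace ℝ (Fin d))
    (hαmeas : ∀ t γ', Measurable fun x => α t x γ')
    -- the parameters `γ_{1:t-1}` used to build the alternative nudged model
    (γseq : ℕ → ℝ)
    (t : ℕ) (γ : ℝ)
    -- the selection criterion `Δ_{g_t}(γ) ≥ ‖g_t‖_∞ ‖ξ_t - ξ̄_t^α‖_TV`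
    (hsel : supNorm (g t) *
          tvDist (pred π0 K g t)
            (pred π0 (altKernel K (aOf α γseq)) (altG g (aOf α γseq)) t) ≤
        ∫ x, (g t (α t x γ) - g t x) ∂(pred π0 K g t)) :
    ∫ x, g t x ∂(pred π0 K g t) ≤
      ∫ x, g t (α t x γ)
        ∂(pred π0 (altKernel K (aOf α γseq)) (altG g (aOf α γseq)) t) := by
  set a := aOf α γseq
  have : IsZeroOrProbabilityMeasure (pred π0 K g t) :=
    isZeroOrProbabilityMeasure_pred π0 K g hKmeas hKprob t
  have : IsZeroOrProbabilityMeasure (pred π0 (altKernel K a) (altG g a) t) :=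
    isZeroOrProbabilityMeasure_pred π0 (altKernel K a) (altG g a)
      (fun s => (hKmeas s).comp (measurable_aOf hαmeas γseq (s - 1))) (fun s _ => hKprob s _) t
  obtain ⟨B, hB⟩ := hgbdd t
  have hg_le : ∀ x, g t x ≤ supNorm (g t) := le_supNorm (hg0 t) hB
  have hnudged_meas : Measurable fun x => g t (α t x γ) := (hgmeas t).comp (hαmeas t γ)
  have hΔ : ∫ x, (g t (α t x γ) - g t x) ∂(pred π0 K g t) =
      ∫ x, g t (α t x γ) ∂(pred π0 K g t) - ∫ x, g t x ∂(pred π0 K g t) :=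
    integral_sub (integrable_of_nonneg_of_le hnudged_meas (fun _ => hg0 t _) fun _ => hg_le _)
      (integrable_of_nonneg_of_le (hgmeas t) (hg0 t) hg_le)
  have htv := integral_le_integral_add_mul_tvDist (μ := pred π0 K g t)
    (ν := pred π0 (altKernel K a) (altG g a) t) hnudged_meas (fun _ => hg0 t _)
    (supNorm_nonneg (g t)) fun _ => hg_le _
  linarith

/-- **Corollary (selection of the nudging parameter increases the normalisation
constant).**  If the nudging parameter `γ` is selected so that
`Δ_{g_t}(γ) ≥ ‖g_t‖_∞ ‖ξ_t - ξ̄_t^α‖_TV`, then `ξ_t(g_t) ≤ ξ̄_t^α(g_t^α)`. -/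
theorem normalisation_increase_of_selection
    {d : ℕ}
    (π0 : Measure (EuclideanSpace ℝ (Fin d))) (hπ0 : IsProbabilityMeasure π0)
    (K : ℕ → EuclideanSpace ℝ (Fin d) → Measure (EuclideanSpace ℝ (Fin d)))
    (hKmeas : ∀ t, Measurable (K t))
    (hKprob : ∀ t x, IsProbabilityMeasure (K t x))
    (g : ℕ → EuclideanSpace ℝ (Fin d) → ℝ)
    (hg0 : ∀ t x, 0 ≤ g t x)
    (hgmeas : ∀ t, Measurable (g t))
    (hgbdd : ∀ t, ∃ C : ℝ, ∀ x, g t x ≤ C)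
    -- `{α_t}` is a family of parametric nudging transformations
    (α : ℕ → EuclideanSpace ℝ (Fin d) → ℝ → EuclideanSpace ℝ (Fin d))
    (hαmeas : ∀ t γ', Measurable fun x => α t x γ')
    (hαcont : ∀ t x, ContinuousOn (fun γ' => α t x γ') (Set.Ici 0))
    (hα0 : ∀ t x, α t x 0 = x)
    (Γ : ℕ → ℝ) (hΓ : ∀ t, 0 < Γ t)
    (hinc : ∀ t x, ∀ γ' ∈ Set.Icc (0 : ℝ) (Γ t), g t x ≤ g t (α t x γ'))
    (hΔpos : ∀ t, ∀ γ' ∈ Set.Ioc (0 : ℝ) (Γ t),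
        0 < ∫ x, (g t (α t x γ') - g t x) ∂(pred π0 K g t))
    -- the parameters `γ_{1:t-1}` used to build the alternative nudged model
    (γseq : ℕ → ℝ)
    (t : ℕ) (γ : ℝ) (hγ : γ ∈ Set.Icc (0 : ℝ) (Γ t))
    -- the selection criterion `Δ_{g_t}(γ) ≥ ‖g_t‖_∞ ‖ξ_t - ξ̄_t^α‖_TV`
    (hsel : supNorm (g t) *
          tvDist (pred π0 K g t)
            (pred π0 (altKernel K (aOf α γseq)) (altG g (aOf α γseq)) t) ≤
        ∫ x, (g t (α t x γ) - g t x) ∂(pred π0 K g t)) :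
    ∫ x, g t x ∂(pred π0 K g t) ≤
      ∫ x, g t (α t x γ)
        ∂(pred π0 (altKernel K (aOf α γseq)) (altG g (aOf α γseq)) t) :=
  normalisation_increase_of_selection_general π0 hπ0 K hKmeas hKprob g hg0 hgmeas hgbdd α hαmeas
    γseq t γ hsel

end Nudging
end
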